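/- Under the dispersivity assumption |∫_{𝕋³} f(k) e^{−itω(k)} dk| ≤ c_ω ⟨t⟩^{−3/2} ‖f‖_{d₁,∞}, one has for every n ≥ 2, β ∈ (0,1], κ ≥ 0 with β+κ ≤ 1, α ∈ ℝ, σ = ±1: ∫_{𝕋³} dk / |α + i(β+κ) − σω(k)|^n ≤ 3 c_ω / (β+κ)^{n−1}. -/

import Mathlib

open MeasureTheory

/-- The fundamental domain `[0,1)³` of the unit torus `𝕋³`. -/
def torusBox : Set (Fin 3 → ℝ) := Set.univ.pi fun _ => Set.Ico (0 : ℝ) 1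

/-- `f : 𝕋³ → ℂ`, i.e. a `ℤ³`-periodic function on `ℝ³`. -/
def TorusFun (f : (Fin 3 → ℝ) → ℂ) : Prop :=
  ∀ (x : Fin 3 → ℝ) (n : Fin 3 → ℤ), f (fun i => x i + n i) = f x

/-- `‖f‖_{d,∞}`: the supremum of all derivatives of `f` of order `≤ d`. -/
noncomputable def CkNorm (d : ℕ) (f : (Fin 3 → ℝ) → ℂ) : ℝ :=
  (Finset.range (d + 1)).sup' Finset.nonempty_range_add_one
    fun j => ⨆ x, ‖iteratedFDeriv ℝ j f x‖

/-- The dispersivity assumption (DR3):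
`|∫_{𝕋³} f(k) e^{−itω(k)} dk| ≤ c_ω ⟨t⟩^{−3/2} ‖f‖_{d₁,∞}` for all `t` and smooth `f`. -/
def Dispersive (ω : (Fin 3 → ℝ) → ℝ) (cω : ℝ) (d₁ : ℕ) : Prop :=
  ∀ (t : ℝ) (f : (Fin 3 → ℝ) → ℂ), ContDiff ℝ (⊤ : ℕ∞) f → TorusFun f →
    ‖∫ k in torusBox, f k * Complex.exp (-Complex.I * (t : ℂ) * (ω k : ℂ))‖ ≤
      cω / Real.sqrt (1 + t ^ 2) ^ ((3 : ℝ) / 2) * CkNorm d₁ f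

section Aux

open Set

lemma aux_integral_cexp {c : ℂ} (hc : 0 < c.re) :
    ∫ t : ℝ in Ioi 0, Complex.exp (-(c*t)) = c⁻¹ := by
  have hcne : c ≠ 0 := fun h => by simp [h] at hc
  have hD : ∀ x : ℝ, HasDerivAt (fun y : ℝ => -Complex.exp (-(c*y)) / c)
      (Complex.exp (-(c*x))) x := by
    intro x
    have h1 : HasDerivAt (fun y : ℝ => Complex.exp (-(c*y))) (-c * Complex.exp (-(c*x))) x := by
      have : HasDerivAt (fun y : ℝ => (-(c * y) : ℂ)) (-c) x := by
        simpa using ((hasDerivAt_id (x:ℂ)).const_mul (-c)).comp_ofReal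
      exact ((Complex.hasDerivAt_exp _).comp x this).congr_deriv (by ring)
    have := (h1.neg).div_const c
    refine this.congr_deriv ?_
    rw [neg_mul, neg_neg, mul_div_cancel_left₀ _ hcne]
  have hnorm : ∀ t : ℝ, ‖Complex.exp (-(c*t))‖ = Real.exp (-(c.re * t)) := by
    intro t
    rw [Complex.norm_exp]
    norm_num
  have hint : IntegrableOn (fun t : ℝ => Complex.exp (-(c*t))) (Ioi 0) := by
    apply Integrable.mono' ((exp_neg_integrableOn_Ioi 0 hc))
    · exact (Complex.measurable_exp.comp (by fun_prop)).aestronglyMeasurable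
    · filter_upwards with t
      rw [hnorm, neg_mul_eq_neg_mul]
  have h1 : Filter.Tendsto (fun y : ℝ => c.re * y) Filter.atTop Filter.atTop :=
    Filter.Tendsto.const_mul_atTop hc Filter.tendsto_id
  have h2 : Filter.Tendsto (fun y : ℝ => Real.exp (-(c.re*y))) Filter.atTop (nhds 0) :=
    Real.tendsto_exp_atBot.comp (Filter.tendsto_neg_atTop_atBot.comp h1)
  have htend : Filter.Tendsto (fun y : ℝ => -Complex.exp (-(c*y)) / c) Filter.atTop (nhds 0) := by
    rw [show (0:ℂ) = -0/c by simp]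
    apply Filter.Tendsto.div_const
    apply Filter.Tendsto.neg
    rw [tendsto_zero_iff_norm_tendsto_zero]
    exact squeeze_zero (fun t => norm_nonneg _) (fun t => (hnorm t).le) h2
  rw [integral_Ioi_of_hasDerivAt_of_tendsto' (fun x _ => hD x) hint htend]
  field_simp
  simp

lemma aux_ckNorm_one_le (d : ℕ) : CkNorm d (fun _ => (1:ℂ)) ≤ 1 := by
  apply Finset.sup'_le
  intro j _
  rcases Nat.eq_zero_or_pos j with hj | hj
  · subst hj
    have : ∀ x : Fin 3 → ℝ, ‖iteratedFDeriv ℝ 0 (fun _ => (1:ℂ)) x‖ = 1 := by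
      intro x; rw [norm_iteratedFDeriv_zero]; simp
    simp only [this]
    exact ciSup_const.le
  · have : ∀ x : Fin 3 → ℝ, ‖iteratedFDeriv ℝ j (fun _ => (1:ℂ)) x‖ = 0 := by
      intro x
      rw [iteratedFDeriv_const_of_ne (by omega)]
      simp
    simp only [this]
    rw [ciSup_const]
    norm_num

lemma aux_B_int (cω : ℝ) :
    IntegrableOn (fun t : ℝ => if t ≤ 1 then cω else cω * t ^ (-(3/2) : ℝ)) (Ioi 0) ∧
    ∫ t in Ioi 0, (if t ≤ 1 then cω else cω * t ^ (-(3/2) : ℝ)) = 3 * cω := by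
  set B : ℝ → ℝ := fun t => if t ≤ 1 then cω else cω * t ^ (-(3/2) : ℝ) with hB
  have h1 : IntegrableOn B (Ioc 0 1) := by
    have hc : IntegrableOn (fun _ : ℝ => cω) (Ioc 0 1) := integrableOn_const (by simp)
    exact hc.congr_fun (fun t ht => by simp [hB, ht.2]) measurableSet_Ioc
  have h2 : IntegrableOn B (Ioi 1) := by
    have hc : IntegrableOn (fun t : ℝ => cω * t ^ (-(3/2):ℝ)) (Ioi 1) :=
      (integrableOn_Ioi_rpow_of_lt (by norm_num) one_pos).const_mul cω
    exact hc.congr_fun (fun t ht => by simp only [hB]; rw [if_neg (not_le.mpr ht)]) measurableSet_Ioi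
  have hsplit : Ioc (0:ℝ) 1 ∪ Ioi 1 = Ioi 0 := Ioc_union_Ioi_eq_Ioi zero_le_one
  have hint : IntegrableOn B (Ioi 0) := by
    rw [← hsplit]; exact h1.union h2
  refine ⟨hint, ?_⟩
  rw [← hsplit, setIntegral_union (by simp [disjoint_left]) measurableSet_Ioi h1 h2]
  have e1 : ∫ t in Ioc (0:ℝ) 1, B t = cω := by
    rw [setIntegral_congr_fun measurableSet_Ioc (g := fun _ => cω) (fun t ht => by simp [hB, ht.2])]
    simp
  have e2 : ∫ t in Ioi (1:ℝ), B t = cω * 2 := by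
    rw [setIntegral_congr_fun measurableSet_Ioi
      (g := fun t => cω * t ^ (-(3/2):ℝ)) (fun t ht => by simp only [hB]; rw [if_neg (not_le.mpr ht)])]
    rw [integral_const_mul, integral_Ioi_rpow_of_lt (by norm_num) one_pos]
    norm_num
  rw [e1, e2]; ring

end Aux

/-- For bounded measurable dispersive `ω` (with `c_ω ≥ 1`), all `n ≥ 2`, `β ∈ (0,1]`,
`κ ≥ 0` with `β + κ ≤ 1`, `σ = ±1` and `α ∈ ℝ`:
`∫_{𝕋³} dk/|α + i(β+κ) − σω(k)|ⁿ ≤ 3 c_ω/(β+κ)^{n−1}`. -/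
theorem stmt_11 (ω : (Fin 3 → ℝ) → ℝ) (hmeas : Measurable ω)
    (ωmax : ℝ) (hbd : ∀ k, |ω k| ≤ ωmax)
    (hper : ∀ (x : Fin 3 → ℝ) (n : Fin 3 → ℤ), ω (fun i => x i + n i) = ω x)
    (cω : ℝ) (hcω : 1 ≤ cω) (d₁ : ℕ) (hdisp : Dispersive ω cω d₁)
    (n : ℕ) (hn : 2 ≤ n)
    (β κ : ℝ) (hβ : 0 < β) (hβ1 : β ≤ 1) (hκ : 0 ≤ κ) (hβκ : β + κ ≤ 1)
    (σ : ℝ) (hσ : σ = 1 ∨ σ = -1) (α : ℝ) :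
    (∫ k in torusBox,
        1 / ‖((α - σ * ω k : ℝ) : ℂ) + Complex.I * ((β + κ : ℝ) : ℂ)‖ ^ n) ≤
      3 * cω / (β + κ) ^ (n - 1) := by
  set l : ℝ := β + κ with hl
  have hlpos : 0 < l := by positivity
  have hcω0 : (0:ℝ) < cω := lt_of_lt_of_le one_pos hcω
  -- basic measure facts
  have hbox_meas : MeasurableSet torusBox :=
    MeasurableSet.univ_pi fun _ => measurableSet_Ico
  have hvol : volume torusBox = 1 := by
    rw [torusBox, volume_pi_pi]
    simp
  haveI hfin : IsFiniteMeasure (volume.restrict torusBox) := by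
    constructor
    rw [Measure.restrict_apply_univ, hvol]
    exact ENNReal.one_lt_top
  -- the dispersive estimate for f = 1
  have hdisp1 : ∀ t : ℝ, ‖∫ k in torusBox, Complex.exp (-Complex.I * t * ω k)‖ ≤
      cω / Real.sqrt (1 + t ^ 2) ^ ((3:ℝ)/2) := by
    intro t
    have h := hdisp t (fun _ => (1:ℂ)) contDiff_const (fun x m => rfl)
    simp only [one_mul] at h
    have hpos : 0 ≤ cω / Real.sqrt (1 + t ^ 2) ^ ((3:ℝ)/2) :=
      div_nonneg (le_trans zero_le_one hcω) (Real.rpow_nonneg (Real.sqrt_nonneg _) _)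
    calc ‖∫ k in torusBox, Complex.exp (-Complex.I * t * ω k)‖ ≤
        cω / Real.sqrt (1 + t ^ 2) ^ ((3:ℝ)/2) * CkNorm d₁ (fun _ => (1:ℂ)) := h
      _ ≤ cω / Real.sqrt (1 + t ^ 2) ^ ((3:ℝ)/2) * 1 :=
          mul_le_mul_of_nonneg_left (aux_ckNorm_one_le d₁) hpos
      _ = _ := mul_one _
  -- the complex resolvent function
  set c : (Fin 3 → ℝ) → ℂ := fun k => (l:ℂ) + Complex.I * ((α - σ * ω k : ℝ):ℂ) with hc
  have hre : ∀ k, (c k).re = l := by intro k; simp [hc]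
  have hcmeas : Measurable c := by fun_prop
  have hnormexp : ∀ (k : Fin 3 → ℝ) (t : ℝ),
      ‖Complex.exp (-(c k * t))‖ = Real.exp (-(l * t)) := by
    intro k t
    rw [Complex.norm_exp]
    simp [Complex.mul_re, hre]
  -- bound on the inner k-integral, for t > 0
  set B : ℝ → ℝ := fun t => if t ≤ 1 then cω else cω * t ^ (-(3/2) : ℝ) with hB
  have hBpos : ∀ t ∈ Set.Ioi (0:ℝ), 0 ≤ B t := by
    intro t ht; simp only [hB]
    split
    · exact hcω0.le
    · exact mul_nonneg hcω0.le (Real.rpow_nonneg (le_of_lt ht) _)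
  have hBound : ∀ t ∈ Set.Ioi (0:ℝ), ‖∫ k in torusBox, Complex.exp (-(c k * t))‖ ≤ B t := by
    intro t ht
    have ht0 : (0:ℝ) < t := ht
    have key : ∀ k, Complex.exp (-(c k * t)) =
        Complex.exp (-(((l:ℂ) + Complex.I * α) * t)) *
          Complex.exp (-Complex.I * ((-(σ*t) : ℝ):ℂ) * ((ω k : ℝ):ℂ)) := by
      intro k
      rw [← Complex.exp_add]
      congr 1
      simp only [hc]
      push_cast
      ring
    simp only [key]
    rw [integral_const_mul, norm_mul]
    have h1 : ‖Complex.exp (-(((l:ℂ) + Complex.I * α) * t))‖ ≤ 1 := by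
      rw [Complex.norm_exp]
      have : (-(((l:ℂ) + Complex.I * α) * t)).re = -(l*t) := by
        simp [Complex.mul_re]
      rw [this, Real.exp_le_one_iff]
      nlinarith
    have h2 : ‖∫ k in torusBox, Complex.exp (-Complex.I * ((-(σ*t) : ℝ):ℂ) * ((ω k : ℝ):ℂ))‖ ≤
        cω / Real.sqrt (1 + t ^ 2) ^ ((3:ℝ)/2) := by
      have := hdisp1 (-(σ*t))
      have hσ2 : (-(σ*t))^2 = t^2 := by rcases hσ with h | h <;> subst h <;> ring
      rwa [hσ2] at this
    have h3 : cω / Real.sqrt (1 + t ^ 2) ^ ((3:ℝ)/2) ≤ B t := by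
      simp only [hB]
      by_cases hcase : t ≤ 1
      · rw [if_pos hcase]
        apply div_le_self hcω0.le
        apply Real.one_le_rpow (Real.one_le_sqrt.mpr (by nlinarith)) (by norm_num)
      · rw [if_neg hcase]
        have htr : (1:ℝ) < t := not_le.mp hcase
        have hs : t ^ ((3:ℝ)/2) ≤ Real.sqrt (1+t^2) ^ ((3:ℝ)/2) := by
          exact Real.rpow_le_rpow ht0.le (Real.le_sqrt_of_sq_le (by nlinarith)) (by norm_num)
        have hpos2 : (0:ℝ) < t ^ ((3:ℝ)/2) := Real.rpow_pos_of_pos ht0 _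
        calc cω / Real.sqrt (1+t^2) ^ ((3:ℝ)/2) ≤ cω / t ^ ((3:ℝ)/2) := by
              gcongr
          _ = cω * t ^ (-(3/2):ℝ) := by
              rw [Real.rpow_neg ht0.le, div_eq_mul_inv]
    exact le_trans (mul_le_mul h1 h2 (norm_nonneg _) zero_le_one)
      (by rw [one_mul]; exact h3)
  -- product integrability and Fubini
  have hBint := aux_B_int cω
  have hinner_meas : Measurable (fun p : (Fin 3 → ℝ) × ℝ => Complex.exp (-(c p.1 * p.2))) :=
    Complex.measurable_exp.comp
      (((hcmeas.comp measurable_fst).mul (Complex.measurable_ofReal.comp measurable_snd)).neg)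
  have hprod : Integrable (Function.uncurry fun (k : Fin 3 → ℝ) (t : ℝ) => Complex.exp (-(c k * t)))
      ((volume.restrict torusBox).prod (volume.restrict (Set.Ioi 0))) := by
    have hg : Integrable (fun p : (Fin 3 → ℝ) × ℝ => (fun _ : Fin 3 → ℝ => (1:ℝ)) p.1 *
        (fun t : ℝ => Real.exp (-(l * t))) p.2)
        ((volume.restrict torusBox).prod (volume.restrict (Set.Ioi 0))) :=
      Integrable.mul_prod (g := fun t : ℝ => Real.exp (-(l * t))) (integrable_const (1:ℝ))
        ((exp_neg_integrableOn_Ioi 0 hlpos).congr_fun (fun t _ => by simp only [neg_mul]) measurableSet_Ioi)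
    apply Integrable.mono' hg
    · exact hinner_meas.aestronglyMeasurable
    · filter_upwards with p
      have := hnormexp p.1 p.2
      simp only [Function.uncurry]
      rw [this, one_mul]
  have hGint : Integrable (fun k => (c k)⁻¹) (volume.restrict torusBox) := by
    apply Integrable.mono' (integrable_const l⁻¹)
    · exact (hcmeas.inv).aestronglyMeasurable
    · filter_upwards with k
      rw [norm_inv]
      apply inv_anti₀ hlpos
      calc l = |(c k).re| := by rw [hre k]; exact (abs_of_pos hlpos).symm
        _ ≤ ‖c k‖ := Complex.abs_re_le_norm _
        _ = ‖c k‖ := rfl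
  have hswap : (∫ k in torusBox, (c k)⁻¹) =
      ∫ t in Set.Ioi (0:ℝ), ∫ k in torusBox, Complex.exp (-(c k * t)) := by
    rw [← MeasureTheory.integral_integral_swap hprod]
    exact integral_congr_ae (Filter.Eventually.of_forall fun k =>
      (aux_integral_cexp (by rw [hre k]; exact hlpos)).symm)
  have hnorm_le : ‖∫ k in torusBox, (c k)⁻¹‖ ≤ 3 * cω := by
    rw [hswap]
    calc ‖∫ t in Set.Ioi (0:ℝ), ∫ k in torusBox, Complex.exp (-(c k * t))‖
        ≤ ∫ t in Set.Ioi (0:ℝ), ‖∫ k in torusBox, Complex.exp (-(c k * t))‖ :=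
          norm_integral_le_integral_norm _
      _ ≤ ∫ t in Set.Ioi (0:ℝ), B t := by
          apply integral_mono_of_nonneg
          · filter_upwards with t; exact norm_nonneg _
          · exact hBint.1
          · filter_upwards [ae_restrict_mem measurableSet_Ioi] with t ht
            exact hBound t ht
      _ = 3 * cω := hBint.2
  -- the core estimate for n = 2
  have hden_pos : ∀ k, 0 < (α - σ * ω k)^2 + l^2 := fun k => by positivity
  have him : ∀ k, (c k).im = α - σ * ω k := by intro k; simp [hc]
  have hre_inv : ∀ k, ((c k)⁻¹).re = l / ((α - σ * ω k)^2 + l^2) := by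
    intro k
    rw [Complex.inv_re, Complex.normSq_apply, hre, him]
    ring_nf
  have hcore : (∫ k in torusBox, 1 / ((α - σ * ω k)^2 + l^2)) ≤ 3 * cω / l := by
    have hpt : ∀ k, 1 / ((α - σ * ω k)^2 + l^2) = (1/l) * ((c k)⁻¹).re := by
      intro k
      rw [hre_inv]
      field_simp
    calc (∫ k in torusBox, 1 / ((α - σ * ω k)^2 + l^2))
        = ∫ k in torusBox, (1/l) * ((c k)⁻¹).re := by simp only [hpt]
      _ = (1/l) * ∫ k in torusBox, ((c k)⁻¹).re := integral_const_mul _ _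
      _ = (1/l) * (∫ k in torusBox, (c k)⁻¹).re := by
          congr 1
          have h := integral_re hGint
          simpa using h
      _ ≤ (1/l) * ‖∫ k in torusBox, (c k)⁻¹‖ := by
          apply mul_le_mul_of_nonneg_left _ (by positivity)
          exact Complex.re_le_norm _
      _ ≤ (1/l) * (3*cω) := mul_le_mul_of_nonneg_left hnorm_le (by positivity)
      _ = 3 * cω / l := by ring
  -- from the core estimate to the n-th power
  set Z : (Fin 3 → ℝ) → ℝ :=
    fun k => ‖((α - σ * ω k : ℝ):ℂ) + Complex.I * ((l:ℝ):ℂ)‖ with hZ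
  have habs2 : ∀ k, Z k ^ 2 = (α - σ * ω k)^2 + l^2 := by
    intro k
    rw [hZ, Complex.sq_norm, Complex.normSq_apply]
    simp only [Complex.add_re, Complex.add_im, Complex.ofReal_re, Complex.ofReal_im,
      Complex.mul_re, Complex.mul_im, Complex.I_re, Complex.I_im]
    ring
  have habs_ge : ∀ k, l ≤ Z k := by
    intro k
    have h := Complex.abs_im_le_norm (((α - σ * ω k : ℝ):ℂ) + Complex.I * ((l:ℝ):ℂ))
    have him2 : (((α - σ * ω k : ℝ):ℂ) + Complex.I * ((l:ℝ):ℂ)).im = l := by simp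
    rw [him2] at h
    exact (le_abs_self l).trans h
  have hZpos : ∀ k, 0 < Z k := fun k => lt_of_lt_of_le hlpos (habs_ge k)
  have hZmeas : Measurable Z := by
    apply continuous_norm.measurable.comp
    fun_prop
  have hpt2 : ∀ k, 1 / Z k ^ n ≤ (1/l^(n-2)) * (1 / ((α - σ * ω k)^2 + l^2)) := by
    intro k
    have h1 : l^(n-2) * ((α - σ * ω k)^2 + l^2) ≤ Z k ^ n := by
      have he : Z k ^ n = Z k ^ (n-2) * Z k ^ 2 := by
        rw [← pow_add]
        congr 1
        omega
      rw [he, ← habs2 k]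
      exact mul_le_mul (pow_le_pow_left₀ hlpos.le (habs_ge k) _) le_rfl
        (by positivity) (pow_nonneg (hZpos k).le _)
    calc 1 / Z k ^ n ≤ 1 / (l^(n-2) * ((α - σ * ω k)^2 + l^2)) :=
          one_div_le_one_div_of_le (by positivity) h1
      _ = (1/l^(n-2)) * (1 / ((α - σ * ω k)^2 + l^2)) := by
          rw [one_div_mul_one_div]
  have hint1 : IntegrableOn (fun k => 1 / Z k ^ n) torusBox := by
    apply Integrable.mono' (integrable_const (1/l^n))
    · exact (measurable_const.div (hZmeas.pow_const n)).aestronglyMeasurable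
    · filter_upwards with k
      rw [Real.norm_eq_abs, abs_of_nonneg (by positivity)]
      exact one_div_le_one_div_of_le (by positivity)
        (pow_le_pow_left₀ hlpos.le (habs_ge k) n)
  have hint2 : IntegrableOn (fun k => 1 / ((α - σ * ω k)^2 + l^2)) torusBox := by
    apply Integrable.mono' (integrable_const (1/l^2))
    · apply Measurable.aestronglyMeasurable
      fun_prop
    · filter_upwards with k
      rw [Real.norm_eq_abs, abs_of_nonneg (by positivity)]
      exact one_div_le_one_div_of_le (by positivity) (by nlinarith [sq_nonneg (α - σ * ω k)])
  have hfinal : (∫ k in torusBox, 1 / Z k ^ n) ≤ 3 * cω / l ^ (n-1) := by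
    calc (∫ k in torusBox, 1 / Z k ^ n)
        ≤ ∫ k in torusBox, (1/l^(n-2)) * (1 / ((α - σ * ω k)^2 + l^2)) :=
          setIntegral_mono_on hint1 (hint2.const_mul _) hbox_meas (fun k _ => hpt2 k)
      _ = (1/l^(n-2)) * ∫ k in torusBox, 1 / ((α - σ * ω k)^2 + l^2) := integral_const_mul _ _
      _ ≤ (1/l^(n-2)) * (3 * cω / l) := mul_le_mul_of_nonneg_left hcore (by positivity)
      _ = 3 * cω / l ^ (n-1) := by
          rw [div_mul_div_comm, one_mul, ← pow_succ]
          congr 2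
          omega
  exact hfinal
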